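/- Let A be an n×n invertible symmetric real matrix, J a p×p symmetric real matrix with J·J = I_p, and ρ > 0. Let X be an n×p real matrix with XᵀAX = J, and let ξ, η be n×p real matrices tangent at X (ξᵀAX + XᵀAξ = 0 and ηᵀAX + XᵀAη = 0). Define Π_X := I_n − X(XᵀX)⁻¹Xᵀ, S_X := A − A X J Xᵀ A, P_X(Y) := Y − X·J·sym(XᵀAY), B_{X,ξ,η} := ξ·XᵀAη + η·XᵀAξ, B'_{X,ξ,η} := sym(Xξᵀ)·A·η + sym(Xηᵀ)·A·ξ − sym(ξηᵀ)·A·X, and C_{X,ξ,η} := sym(A·sym(XJξᵀ)·A·S_X)·η + sym(A·sym(XJηᵀ)·A·S_X)·ξ − sym(A·S_X·sym(ξηᵀ)·A)·X·J. Let Ω_ξ := XᵀAξ and Ω_η := XᵀAη. Then P_X((ρ·XXᵀ + A⁻¹Π_XA⁻¹)·(ρ⁻¹·A·B'_{X,ξ,η} − 2·C_{X,ξ,η})) = A⁻¹·Π_X·(ρ⁻¹·B_{X,ξ,η} − 2·A⁻¹·C_{X,ξ,η}) + 2·P_X(X·(−ρ·Xᵀ·C_{X,ξ,η} + sym(Ω_ξ·Ω_η))).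 -/

import Mathlib

open Matrix

/-- The symmetric part of a square matrix. -/
noncomputable def msym {m : Type*} (S : Matrix m m ℝ) : Matrix m m ℝ :=
  (1 / 2 : ℝ) • (S + Sᵀ)

/-! Since `J² = 1`, `J XᵀA` is a left inverse of `X`, so `XᵀX` is invertible and `Π_X` annihilates
`X` on both sides. On tangent vectors `B' = B + X·sym(ξᵀAη)`, and `XᵀAB = Ω_ξΩ_η + Ω_ηΩ_ξ =
2·sym(Ω_ξΩ_η)` because the `Ω` are skew. Expanding the product therefore gives
`A⁻¹Π_X(ρ⁻¹B − 2A⁻¹C) + XJ·sym(ξᵀAη) + 2X(−ρXᵀC + sym(Ω_ξΩ_η))`. The tangent projection fixes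
the first summand, since `XᵀA·A⁻¹Π_X = XᵀΠ_X = 0`, and kills the second, since
`P_X(XJK) = XJ(K − sym K)`. -/

namespace Matrix

variable {R : Type*} {m n : Type*} [Fintype m] [Fintype n]

theorem isUnit_transpose_mul_self_of_mul_eq_one [Field R] [LinearOrder R] [IsStrictOrderedRing R]
    [DecidableEq n] {X : Matrix m n R} {L : Matrix n m R} (hLX : L * X = 1) :
    IsUnit (Xᵀ * X) := by
  rw [← mulVec_injective_iff_isUnit, ← coe_mulVecLin, ← LinearMap.ker_eq_bot,
    ker_mulVecLin_transpose_mul_self, LinearMap.ker_eq_bot, coe_mulVecLin]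
  intro v w hvw
  simpa [mulVec_mulVec, hLX] using congrArg (L *ᵥ ·) hvw

section Projection

variable [CommRing R] [DecidableEq m] [DecidableEq n] {X : Matrix m n R}

theorem one_sub_proj_mul_self (hX : IsUnit (Xᵀ * X)) : (1 - X * (Xᵀ * X)⁻¹ * Xᵀ) * X = 0 := by
  simp only [Matrix.sub_mul, Matrix.one_mul, Matrix.mul_assoc,
    nonsing_inv_mul _ ((isUnit_iff_isUnit_det _).mp hX), Matrix.mul_one, sub_self]

theorem transpose_mul_one_sub_proj (hX : IsUnit (Xᵀ * X)) :
    Xᵀ * (1 - X * (Xᵀ * X)⁻¹ * Xᵀ) = 0 := by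
  simp only [Matrix.mul_sub, Matrix.mul_one, ← Matrix.mul_assoc,
    mul_nonsing_inv _ ((isUnit_iff_isUnit_det _).mp hX), Matrix.one_mul, sub_self]

end Projection

end Matrix

section Symmetric

variable {m : Type*}

theorem msym_add (S T : Matrix m m ℝ) : msym (S + T) = msym S + msym T := by
  simp only [msym, transpose_add, ← smul_add]
  abel_nf

theorem msym_smul (c : ℝ) (S : Matrix m m ℝ) : msym (c • S) = c • msym S := by
  simp only [msym, transpose_smul, ← smul_add, smul_comm c]

theorem msym_of_transpose_eq {S : Matrix m m ℝ} (hS : Sᵀ = S) : msym S = S := by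
  rw [msym, hS, ← two_smul ℝ S, smul_smul]
  norm_num

theorem transpose_msym (S : Matrix m m ℝ) : (msym S)ᵀ = msym S := by
  rw [msym, transpose_smul, transpose_add, transpose_transpose, add_comm]

theorem two_smul_msym_mul_of_skew [Fintype m] {M N : Matrix m m ℝ} (hM : Mᵀ = -M)
    (hN : Nᵀ = -N) : (2 : ℝ) • msym (M * N) = M * N + N * M := by
  rw [msym, transpose_mul, hM, hN, neg_mul_neg, smul_smul]
  norm_num

end Symmetric

section Tangent

variable {n p : Type*} [Fintype n] [Fintype p]

noncomputable def tangentProj (A : Matrix n n ℝ) (J : Matrix p p ℝ) (X : Matrix n p ℝ) :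
    Matrix n p ℝ →ₗ[ℝ] Matrix n p ℝ where
  toFun Y := Y - X * J * msym (Xᵀ * A * Y)
  map_add' Y Z := by
    simp only [Matrix.mul_add, msym_add]
    abel
  map_smul' c Y := by
    simp only [Matrix.mul_smul, msym_smul, RingHom.id_apply, smul_sub]

variable {A : Matrix n n ℝ} {J : Matrix p p ℝ} {X : Matrix n p ℝ}

theorem tangentProj_apply (Y : Matrix n p ℝ) :
    tangentProj A J X Y = Y - X * J * msym (Xᵀ * A * Y) := rfl

theorem tangentProj_apply_of_mul_eq_zero {Y : Matrix n p ℝ} (hY : Xᵀ * A * Y = 0) :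
    tangentProj A J X Y = Y := by
  simp [tangentProj_apply, hY, msym]

theorem tangentProj_mul_mul_eq_zero [DecidableEq p] (hX : Xᵀ * A * X = J) (hJ : J * J = 1)
    {K : Matrix p p ℝ} (hK : Kᵀ = K) : tangentProj A J X (X * (J * K)) = 0 := by
  simp only [tangentProj_apply, ← Matrix.mul_assoc, hX, hJ, Matrix.one_mul,
    msym_of_transpose_eq hK, sub_self]

end Tangent

theorem transpose_mul_mul_eq_neg_of_tangent {n p : Type*} [Fintype n] {A : Matrix n n ℝ}
    {X ξ : Matrix n p ℝ} (hA : Aᵀ = A) (hξ : ξᵀ * A * X + Xᵀ * A * ξ = 0) :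
    (Xᵀ * A * ξ)ᵀ = -(Xᵀ * A * ξ) := by
  rw [transpose_mul, transpose_mul, transpose_transpose, hA, ← Matrix.mul_assoc]
  exact eq_neg_of_add_eq_zero_left hξ

section Christoffel

variable {n p : Type*} [Fintype n] [Fintype p]

def christoffelB (A : Matrix n n ℝ) (X ξ η : Matrix n p ℝ) : Matrix n p ℝ :=
  ξ * (Xᵀ * A * η) + η * (Xᵀ * A * ξ)

noncomputable def christoffelB' (A : Matrix n n ℝ) (X ξ η : Matrix n p ℝ) : Matrix n p ℝ :=
  msym (X * ξᵀ) * A * η + msym (X * ηᵀ) * A * ξ - msym (ξ * ηᵀ) * A * X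

variable {A : Matrix n n ℝ} {X ξ η : Matrix n p ℝ}

theorem christoffelB'_eq_add (hA : Aᵀ = A) (hξ : ξᵀ * A * X + Xᵀ * A * ξ = 0)
    (hη : ηᵀ * A * X + Xᵀ * A * η = 0) :
    christoffelB' A X ξ η = christoffelB A X ξ η + X * msym (ξᵀ * A * η) := by
  have hξ' : ξᵀ * (A * X) = -(Xᵀ * (A * ξ)) := by
    simpa only [Matrix.mul_assoc] using eq_neg_of_add_eq_zero_left hξ
  have hη' : ηᵀ * (A * X) = -(Xᵀ * (A * η)) := by
    simpa only [Matrix.mul_assoc] using eq_neg_of_add_eq_zero_left hη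
  simp only [christoffelB', christoffelB, msym, Matrix.smul_mul, Matrix.add_mul, Matrix.mul_add,
    Matrix.mul_smul, transpose_mul, transpose_transpose, hA, Matrix.mul_assoc, hξ', hη',
    Matrix.mul_neg]
  module

theorem metricInv_mul_eq [DecidableEq n] {Pi : Matrix n n ℝ} (hA : A⁻¹ * A = 1) {ρ : ℝ}
    (hρ : ρ ≠ 0) {B B' : Matrix n p ℝ} (C : Matrix n p ℝ) {M N : Matrix p p ℝ}
    (hPi : Pi * B' = Pi * B) (hXAB' : Xᵀ * (A * B') = (2 : ℝ) • M + N) :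
    (ρ • (X * Xᵀ) + A⁻¹ * Pi * A⁻¹) * (ρ⁻¹ • (A * B') - (2 : ℝ) • C)
      = A⁻¹ * Pi * (ρ⁻¹ • B - (2 : ℝ) • (A⁻¹ * C)) + X * N
        + (2 : ℝ) • (X * (-(ρ • (Xᵀ * C)) + M)) := by
  have hAA (Y : Matrix n p ℝ) : A⁻¹ * (A * Y) = Y := by rw [← Matrix.mul_assoc, hA, Matrix.one_mul]
  simp only [Matrix.add_mul, Matrix.mul_sub, Matrix.mul_add, Matrix.smul_mul, Matrix.mul_smul,
    Matrix.mul_assoc, hAA, hPi, hXAB', smul_add, smul_neg, Matrix.mul_neg, smul_smul]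
  match_scalars <;> field_simp

end Christoffel

theorem projected_Christoffel_G1_general
    (n p : ℕ)
    (A : Matrix (Fin n) (Fin n) ℝ) (hA : Aᵀ = A) (hAinv : IsUnit A)
    (J : Matrix (Fin p) (Fin p) ℝ) (hJ2 : J * J = 1)
    (ρ : ℝ) (hρ : 0 < ρ)
    (X : Matrix (Fin n) (Fin p) ℝ) (hX : Xᵀ * A * X = J)
    (ξ η : Matrix (Fin n) (Fin p) ℝ)
    (hξ : ξᵀ * A * X + Xᵀ * A * ξ = 0)
    (hη : ηᵀ * A * X + Xᵀ * A * η = 0)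
    (Pi : Matrix (Fin n) (Fin n) ℝ) (hPi : Pi = 1 - X * (Xᵀ * X)⁻¹ * Xᵀ)
    (P : Matrix (Fin n) (Fin p) ℝ → Matrix (Fin n) (Fin p) ℝ)
    (hP : ∀ Y, P Y = Y - X * J * msym (Xᵀ * A * Y))
    (B : Matrix (Fin n) (Fin p) ℝ)
    (hB : B = ξ * (Xᵀ * A * η) + η * (Xᵀ * A * ξ))
    (B' : Matrix (Fin n) (Fin p) ℝ)
    (hB' : B' = msym (X * ξᵀ) * A * η + msym (X * ηᵀ) * A * ξ - msym (ξ * ηᵀ) * A * X)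
    (C : Matrix (Fin n) (Fin p) ℝ)
    (Ωξ Ωη : Matrix (Fin p) (Fin p) ℝ)
    (hΩξ : Ωξ = Xᵀ * A * ξ) (hΩη : Ωη = Xᵀ * A * η) :
    P ((ρ • (X * Xᵀ) + A⁻¹ * Pi * A⁻¹) * (ρ⁻¹ • (A * B') - (2 : ℝ) • C))
      = A⁻¹ * Pi * (ρ⁻¹ • B - (2 : ℝ) • (A⁻¹ * C))
        + (2 : ℝ) • P (X * (-(ρ • (Xᵀ * C)) + msym (Ωξ * Ωη))) := by
  obtain rfl : P = tangentProj A J X := funext hP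
  have hAdet := (isUnit_iff_isUnit_det A).mp hAinv
  have hXX : IsUnit (Xᵀ * X) := isUnit_transpose_mul_self_of_mul_eq_one (L := J * (Xᵀ * A)) <| by
    rw [Matrix.mul_assoc, hX, hJ2]
  have hB'B : B' = B + X * msym (ξᵀ * A * η) := by
    rw [hB', hB]
    exact christoffelB'_eq_add hA hξ hη
  have hPiB' : Pi * B' = Pi * B := by
    rw [hB'B, Matrix.mul_add, ← Matrix.mul_assoc, hPi, one_sub_proj_mul_self hXX,
      Matrix.zero_mul, add_zero]
  have hXAB' : Xᵀ * (A * B') = (2 : ℝ) • msym (Ωξ * Ωη) + J * msym (ξᵀ * A * η) := by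
    rw [hΩξ, hΩη, two_smul_msym_mul_of_skew (transpose_mul_mul_eq_neg_of_tangent hA hξ)
      (transpose_mul_mul_eq_neg_of_tangent hA hη), hB'B, hB]
    simp only [Matrix.mul_add, ← Matrix.mul_assoc, hX]
  have hXAPi (W : Matrix (Fin n) (Fin p) ℝ) : Xᵀ * A * (A⁻¹ * Pi * W) = 0 := by
    rw [← Matrix.mul_assoc, ← Matrix.mul_assoc, Matrix.mul_assoc Xᵀ, mul_nonsing_inv A hAdet,
      Matrix.mul_one, hPi, transpose_mul_one_sub_proj hXX, Matrix.zero_mul]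
  rw [metricInv_mul_eq (nonsing_inv_mul A hAdet) hρ.ne' C hPiB' hXAB', map_add, map_add, map_smul,
    tangentProj_apply_of_mul_eq_zero (hXAPi _), tangentProj_mul_mul_eq_zero hX hJ2
    (transpose_msym _), add_zero]

/-- The projected Christoffel function for the metric `G¹`:
`P_X(Γ¹_X(ξ,η)) = A⁻¹Pi_X(ρ⁻¹B − 2A⁻¹C) + 2P_X(X(−ρXᵀC + sym(Ω_ξΩ_η)))`. -/
theorem projected_Christoffel_G1
    (n p : ℕ) (hpn : p ≤ n)
    (A : Matrix (Fin n) (Fin n) ℝ) (hA : Aᵀ = A) (hAinv : IsUnit A)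
    (J : Matrix (Fin p) (Fin p) ℝ) (hJ : Jᵀ = J) (hJ2 : J * J = 1)
    (ρ : ℝ) (hρ : 0 < ρ)
    (X : Matrix (Fin n) (Fin p) ℝ) (hX : Xᵀ * A * X = J)
    (ξ η : Matrix (Fin n) (Fin p) ℝ)
    (hξ : ξᵀ * A * X + Xᵀ * A * ξ = 0)
    (hη : ηᵀ * A * X + Xᵀ * A * η = 0)
    (Pi : Matrix (Fin n) (Fin n) ℝ) (hPi : Pi = 1 - X * (Xᵀ * X)⁻¹ * Xᵀ)
    (S : Matrix (Fin n) (Fin n) ℝ) (hS : S = A - A * X * J * Xᵀ * A)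
    (P : Matrix (Fin n) (Fin p) ℝ → Matrix (Fin n) (Fin p) ℝ)
    (hP : ∀ Y, P Y = Y - X * J * msym (Xᵀ * A * Y))
    (B : Matrix (Fin n) (Fin p) ℝ)
    (hB : B = ξ * (Xᵀ * A * η) + η * (Xᵀ * A * ξ))
    (B' : Matrix (Fin n) (Fin p) ℝ)
    (hB' : B' = msym (X * ξᵀ) * A * η + msym (X * ηᵀ) * A * ξ - msym (ξ * ηᵀ) * A * X)
    (C : Matrix (Fin n) (Fin p) ℝ)
    (hC : C = msym (A * msym (X * J * ξᵀ) * A * S) * η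
      + msym (A * msym (X * J * ηᵀ) * A * S) * ξ
      - msym (A * S * msym (ξ * ηᵀ) * A) * X * J)
    (Ωξ Ωη : Matrix (Fin p) (Fin p) ℝ)
    (hΩξ : Ωξ = Xᵀ * A * ξ) (hΩη : Ωη = Xᵀ * A * η) :
    P ((ρ • (X * Xᵀ) + A⁻¹ * Pi * A⁻¹) * (ρ⁻¹ • (A * B') - (2 : ℝ) • C))
      = A⁻¹ * Pi * (ρ⁻¹ • B - (2 : ℝ) • (A⁻¹ * C))
        + (2 : ℝ) • P (X * (-(ρ • (Xᵀ * C)) + msym (Ωξ * Ωη))) :=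
  projected_Christoffel_G1_general n p A hA hAinv J hJ2 ρ hρ X hX ξ η hξ hη Pi hPi P hP B hB B' hB'
    C Ωξ Ωη hΩξ hΩη
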